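/- arXiv:1406.4452 — 2 statements merged into one kernel-verified Lean document; each statement's English description precedes it below -/
import Mathlib

section
/- Let U : [0,∞) → ℝ be twice continuously differentiable with U'' bounded, α > 0, and c ∈ ℂ with Im c ≠ 0. Let φ : [0,∞) → ℂ be a twice continuously differentiable solution of the Rayleigh equation (U − c)(φ'' − α²φ) = U''φ on (0,∞) with φ(0) = 0, φ(Z) → 0 as Z → ∞, φ, φ' ∈ L²(0,∞), and φ'(Z)·conj(φ(Z)) → 0 as Z → ∞. Then (Im c) · ∫₀^∞ (U''(Z)/|U(Z) − c|²) |φ(Z)|² dZ = 0. -/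
/-!
Multiplying the Rayleigh equation by `conj φ / (U - c)` gives
`φ'' conj φ = α² |φ|² + U'' |φ|² / (U - c)`, and `Im (1 / (U - c)) = Im c / |U - c|²`, so
`Im c · U'' |φ|² / |U - c|² = Im (φ'' conj φ)` on `(0, ∞)`. Integrating by parts,
`∫₀ᵀ φ'' conj φ = φ'(T) conj φ(T) - ∫₀ᵀ |φ'|²` since `φ(0) = 0`, and the last integral is real.
Hence `Im c · ∫₀ᵀ U'' |φ|² / |U - c|² = Im (φ'(T) conj φ(T)) → 0`.
-/

open MeasureTheory Filter Set

open scoped ComplexConjugate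

theorem intervalIntegral_deriv_deriv_mul_conj {φ : ℝ → ℂ} (hφ : ContDiff ℝ 2 φ) (a b : ℝ) :
    ∫ x in a..b, deriv (deriv φ) x * conj (φ x) =
      deriv φ b * conj (φ b) - deriv φ a * conj (φ a) -
        ∫ x in a..b, ((‖deriv φ x‖ ^ 2 : ℝ) : ℂ) := by
  have hφ' : ContDiff ℝ 1 (deriv φ) := hφ.deriv'
  have hφ'' : Continuous (deriv (deriv φ)) := hφ'.continuous_deriv_one
  have hparts := intervalIntegral.integral_deriv_mul_eq_sub
    (fun x _ ↦ (hφ'.differentiable one_ne_zero x).hasDerivAt)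
    (fun x _ ↦ (hφ.differentiable two_ne_zero x).hasDerivAt.star)
    (hφ''.intervalIntegrable a b)
    (hφ'.continuous.star.intervalIntegrable a b)
  rw [intervalIntegral.integral_add (f := fun x ↦ deriv (deriv φ) x * star (φ x))
    (g := fun x ↦ deriv φ x * star (deriv φ x))
    ((hφ''.mul hφ.continuous.star).intervalIntegrable a b)
    ((hφ'.continuous.mul hφ'.continuous.star).intervalIntegrable a b)] at hparts
  simp only [Complex.star_def, Complex.mul_conj'] at hparts
  push_cast
  exact eq_sub_of_add_eq hparts

theorem im_intervalIntegral_deriv_deriv_mul_conj {φ : ℝ → ℂ} (hφ : ContDiff ℝ 2 φ) (a b : ℝ) :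
    (∫ x in a..b, deriv (deriv φ) x * conj (φ x)).im =
      (deriv φ b * conj (φ b)).im - (deriv φ a * conj (φ a)).im := by
  rw [intervalIntegral_deriv_deriv_mul_conj hφ, intervalIntegral.integral_ofReal]
  simp

theorem im_mul_conj_of_rayleigh {u v a : ℝ} {c p q : ℂ} (hc : c.im ≠ 0)
    (h : ((u : ℂ) - c) * (p - (a : ℂ) ^ 2 * q) = (v : ℂ) * q) :
    (p * conj q).im = c.im * (v / ‖(u : ℂ) - c‖ ^ 2 * ‖q‖ ^ 2) := by
  have hne : (u : ℂ) - c ≠ 0 := fun h0 ↦ hc (by simpa using congrArg Complex.im h0)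
  have hp : p * conj q =
      (a : ℂ) ^ 2 * (‖q‖ ^ 2 : ℝ) + v * (‖q‖ ^ 2 : ℝ) * ((u : ℂ) - c)⁻¹ := by
    have hsolve : p = (a : ℂ) ^ 2 * q + v * q * ((u : ℂ) - c)⁻¹ := by
      field_simp
      linear_combination h
    push_cast
    rw [hsolve, ← Complex.mul_conj']
    ring
  rw [hp, Complex.inv_def, Complex.normSq_eq_norm_sq]
  simp [← Complex.ofReal_pow]
  ring

theorem rayleigh_tendsto_im_mul_intervalIntegral {U : ℝ → ℝ} {α : ℝ} {c : ℂ} {φ : ℝ → ℂ}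
    (hφ : ContDiff ℝ 2 φ)
    (hray : ∀ Z ∈ Ioi (0:ℝ),
      (Complex.ofReal (U Z) - c) * (deriv (deriv φ) Z - (α : ℂ)^2 * φ Z)
        = Complex.ofReal (deriv (deriv U) Z) * φ Z)
    (hφ0 : φ 0 = 0)
    (hcross : Tendsto (fun Z => deriv φ Z * conj (φ Z)) atTop (nhds 0))
    (hc : c.im ≠ 0) :
    Tendsto (fun T ↦ c.im * ∫ Z in (0:ℝ)..T,
        (deriv (deriv U) Z / ‖Complex.ofReal (U Z) - c‖^2) * ‖φ Z‖^2) atTop (nhds 0) := by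
  have hcont : Continuous (fun Z ↦ deriv (deriv φ) Z * conj (φ Z)) :=
    hφ.deriv'.continuous_deriv_one.mul (Complex.continuous_conj.comp hφ.continuous)
  refine ((Complex.continuous_im.tendsto 0).comp hcross).congr' ?_
  filter_upwards [eventually_ge_atTop 0] with T hT
  have hintegrand : c.im * ∫ Z in (0:ℝ)..T,
        (deriv (deriv U) Z / ‖Complex.ofReal (U Z) - c‖^2) * ‖φ Z‖^2
      = ∫ Z in (0:ℝ)..T, (deriv (deriv φ) Z * conj (φ Z)).im := by
    rw [← intervalIntegral.integral_const_mul]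
    refine intervalIntegral.integral_congr_ae (Eventually.of_forall fun Z hZ ↦ ?_)
    rw [uIoc_of_le hT] at hZ
    exact (im_mul_conj_of_rayleigh hc (hray Z hZ.1)).symm
  have him := intervalIntegral.intervalIntegral_im (hcont.intervalIntegrable (μ := volume) 0 T)
  simp only [RCLike.im_to_complex] at him
  rw [hintegrand, him, im_intervalIntegral_deriv_deriv_mul_conj hφ, hφ0]
  simp

theorem rayleigh_imaginary_part_identity_general
    (U : ℝ → ℝ) (α : ℝ) (c : ℂ) (φ : ℝ → ℂ)
    (hφ : ContDiff ℝ 2 φ)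
    (hray : ∀ Z ∈ Ioi (0:ℝ),
      (Complex.ofReal (U Z) - c) * (deriv (deriv φ) Z - (α : ℂ)^2 * φ Z)
        = Complex.ofReal (deriv (deriv U) Z) * φ Z)
    (hφ0 : φ 0 = 0)
    (hcross : Tendsto (fun Z => deriv φ Z * (starRingEnd ℂ) (φ Z)) atTop (nhds 0))
    (hc : c.im ≠ 0) :
    c.im * ∫ Z in Ioi (0:ℝ),
        (deriv (deriv U) Z / ‖Complex.ofReal (U Z) - c‖^2) * ‖φ Z‖^2 = 0 := by
  have himproper := rayleigh_tendsto_im_mul_intervalIntegral (α := α) hφ hray hφ0 hcross hc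
  by_cases hint : IntegrableOn
      (fun Z ↦ (deriv (deriv U) Z / ‖Complex.ofReal (U Z) - c‖^2) * ‖φ Z‖^2) (Ioi 0)
  · exact tendsto_nhds_unique
      ((intervalIntegral_tendsto_integral_Ioi 0 hint tendsto_id).const_mul c.im) himproper
  · -- the Bochner integral of a non-integrable function is `0` by convention
    rw [integral_undef hint, mul_zero]

/-- Imaginary part of the Rayleigh energy identity:
`Im c · ∫ (U''/|U - c|²) |φ|² = 0`. -/
theorem rayleigh_imaginary_part_identity
    (U : ℝ → ℝ) (α : ℝ) (c : ℂ) (φ : ℝ → ℂ)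
    (hU : ContDiff ℝ 2 U)
    (hU2 : ∃ M : ℝ, ∀ Z : ℝ, 0 ≤ Z → |deriv (deriv U) Z| ≤ M)
    (hα : 0 < α)
    (hφ : ContDiff ℝ 2 φ)
    (hray : ∀ Z ∈ Ioi (0:ℝ),
      (Complex.ofReal (U Z) - c) * (deriv (deriv φ) Z - (α : ℂ)^2 * φ Z)
        = Complex.ofReal (deriv (deriv U) Z) * φ Z)
    (hφ0 : φ 0 = 0)
    (hφ_inf : Tendsto φ atTop (nhds 0))
    (hφL2 : IntegrableOn (fun Z => ‖φ Z‖^2) (Ioi 0))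
    (hφdL2 : IntegrableOn (fun Z => ‖deriv φ Z‖^2) (Ioi 0))
    (hcross : Tendsto (fun Z => deriv φ Z * (starRingEnd ℂ) (φ Z)) atTop (nhds 0))
    (hc : c.im ≠ 0) :
    c.im * ∫ Z in Ioi (0:ℝ),
        (deriv (deriv U) Z / ‖Complex.ofReal (U Z) - c‖^2) * ‖φ Z‖^2 = 0 :=
  rayleigh_imaginary_part_identity_general U α c φ hφ hray hφ0 hcross hc
end

section
/- (Fjortoft's criterion.) Let U : [0,∞) → ℝ be twice continuously differentiable with U'' bounded, α > 0, and c ∈ ℂ with Im c > 0. Suppose φ : [0,∞) → ℂ is a twice continuously differentiable solution of the Rayleigh equation (U − c)(φ'' − α²φ) = U''φ on (0,∞) with φ(0) = 0, φ(Z) → 0 as Z → ∞, φ, φ' ∈ L²(0,∞), φ'(Z)·conj(φ(Z)) → 0 as Z → ∞, and φ is not identically zero. Then for every point z_c ∈ [0,∞) with U''(z_c) = 0, there exists a point z ∈ (0,∞) where U''(z)(U(z) − U(z_c)) < 0. That is, a necessary condition for instability is that U''·(U − U(z_c)) be negative somewhere in the flow, where z_c is a point at which U'' vanishes. -/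
open MeasureTheory Filter Set ComplexConjugate

/-!
Multiplying the Rayleigh equation by `conj φ / (U - c)` and integrating by parts (the boundary
terms vanish because `φ 0 = 0` and `φ' conj φ → 0`) gives
`∫ U'' / (U - c) |φ|² = -∫ (|φ'|² + α² |φ|²)`.
Since `Im ((c - v) / (U - c)) = Im c (U - v) / |U - c|²` for real `v`, multiplying by `c - U z_c`
and taking imaginary parts yields
`∫ U'' (U - U z_c) / |U - c|² |φ|² = -∫ (|φ'|² + α² |φ|²) < 0`,
so the integrand is negative somewhere.
-/

theorem IsOpen.setIntegral_pos_of_continuous {X : Type*} [TopologicalSpace X] [MeasurableSpace X]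
    [OpensMeasurableSpace X] {μ : Measure X} [μ.IsOpenPosMeasure] {f : X → ℝ} {s : Set X} {x : X}
    (hs : IsOpen s) (hf : Continuous f) (hfi : IntegrableOn f s μ) (hf0 : ∀ y ∈ s, 0 ≤ f y)
    (hx : x ∈ s) (hfx : f x ≠ 0) : 0 < ∫ y in s, f y ∂μ := by
  rw [setIntegral_pos_iff_support_of_nonneg_ae
    ((ae_restrict_iff' hs.measurableSet).2 (ae_of_all _ hf0)) hfi]
  exact (hf.isOpen_support.inter hs).measure_pos μ ⟨x, hfx, hx⟩

theorem hasDerivAt_deriv_mul_conj {φ : ℝ → ℂ} {x : ℝ} (hφ : DifferentiableAt ℝ φ x)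
    (hφ' : DifferentiableAt ℝ (deriv φ) x) :
    HasDerivAt (fun y => deriv φ y * conj (φ y))
      (deriv (deriv φ) x * conj (φ x) + ((‖deriv φ x‖ ^ 2 : ℝ) : ℂ)) x := by
  rw [Complex.ofReal_pow, ← Complex.mul_conj']
  exact hφ'.hasDerivAt.mul hφ.hasDerivAt.star

theorem integral_Ioi_deriv_deriv_mul_conj {φ : ℝ → ℂ} {a : ℝ} (hφ : Differentiable ℝ φ)
    (hφ' : Differentiable ℝ (deriv φ)) (ha : φ a = 0)
    (hint : IntegrableOn (fun x => deriv (deriv φ) x * conj (φ x)) (Ioi a))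
    (hint' : IntegrableOn (fun x => ‖deriv φ x‖ ^ 2) (Ioi a))
    (hlim : Tendsto (fun x => deriv φ x * conj (φ x)) atTop (nhds 0)) :
    ∫ x in Ioi a, deriv (deriv φ) x * conj (φ x) = -∫ x in Ioi a, ((‖deriv φ x‖ ^ 2 : ℝ) : ℂ) := by
  have hint'' : IntegrableOn (fun x => ((‖deriv φ x‖ ^ 2 : ℝ) : ℂ)) (Ioi a) := hint'.ofReal
  have h := integral_Ioi_of_hasDerivAt_of_tendsto'
    (fun x _ => hasDerivAt_deriv_mul_conj (hφ x) (hφ' x)) (hint.add hint'') hlim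
  rw [integral_add hint hint'', ha, map_zero, mul_zero, sub_zero] at h
  linear_combination h

theorem mul_conj_eq_of_mul_sub_mul_eq {w p s b z : ℂ} (hw : w ≠ 0) (h : w * (p - s * z) = b * z) :
    p * conj z = s * ((‖z‖ ^ 2 : ℝ) : ℂ) + b / w * ((‖z‖ ^ 2 : ℝ) : ℂ) := by
  have hp : p = s * z + b / w * z := by
    field_simp
    linear_combination h
  rw [hp, Complex.ofReal_pow, ← Complex.mul_conj']
  ring

theorem Complex.im_le_norm_ofReal_sub (u : ℝ) (c : ℂ) : c.im ≤ ‖(u : ℂ) - c‖ :=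
  (le_abs_self _).trans (by simpa using Complex.abs_im_le_norm ((u : ℂ) - c))

theorem Complex.im_sub_mul_ofReal_div (a u v : ℝ) (c : ℂ) :
    ((c - v) * (a / (u - c))).im = c.im * (a * (u - v) / Complex.normSq (u - c)) := by
  simp only [Complex.mul_im, Complex.div_re, Complex.div_im, Complex.sub_re, Complex.sub_im,
    Complex.ofReal_re, Complex.ofReal_im, Complex.normSq_apply]
  ring

theorem Complex.ofReal_sub_ne_zero_of_im_pos (u : ℝ) {c : ℂ} (hc : 0 < c.im) : (u : ℂ) - c ≠ 0 :=
  norm_pos_iff.mp (hc.trans_le (Complex.im_le_norm_ofReal_sub u c))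

section Rayleigh

variable {U : ℝ → ℝ} {α : ℝ} {c : ℂ} {φ : ℝ → ℂ}

theorem rayleigh_deriv_deriv_mul_conj (hc : 0 < c.im)
    (hray : ∀ Z ∈ Ioi (0:ℝ),
      (Complex.ofReal (U Z) - c) * (deriv (deriv φ) Z - (α : ℂ)^2 * φ Z)
        = Complex.ofReal (deriv (deriv U) Z) * φ Z) :
    ∀ Z ∈ Ioi (0:ℝ), deriv (deriv φ) Z * conj (φ Z) =
      (α : ℂ) ^ 2 * ((‖φ Z‖ ^ 2 : ℝ) : ℂ)
        + ((deriv (deriv U) Z : ℝ) : ℂ) / (U Z - c) * ((‖φ Z‖ ^ 2 : ℝ) : ℂ) :=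
  fun Z hZ =>
    mul_conj_eq_of_mul_sub_mul_eq (Complex.ofReal_sub_ne_zero_of_im_pos (U Z) hc) (hray Z hZ)

theorem integrableOn_rayleigh_weight
    (hU2 : ∃ M : ℝ, ∀ Z : ℝ, 0 ≤ Z → |deriv (deriv U) Z| ≤ M) (hc : 0 < c.im)
    (hφ : ContDiff ℝ 2 φ)
    (hray : ∀ Z ∈ Ioi (0:ℝ),
      (Complex.ofReal (U Z) - c) * (deriv (deriv φ) Z - (α : ℂ)^2 * φ Z)
        = Complex.ofReal (deriv (deriv U) Z) * φ Z)
    (hφL2 : IntegrableOn (fun Z => ‖φ Z‖ ^ 2) (Ioi 0)) :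
    IntegrableOn (fun Z => ((deriv (deriv U) Z : ℝ) : ℂ) / (U Z - c) * ((‖φ Z‖ ^ 2 : ℝ) : ℂ))
      (Ioi 0) := by
  obtain ⟨M, hM⟩ := hU2
  have hφ'' : Continuous (deriv (deriv φ)) := (hφ.deriv' (n := 1)).continuous_deriv le_rfl
  -- On `(0, ∞)` the Rayleigh equation identifies the weight with a continuous function.
  have hmeas : AEStronglyMeasurable
      (fun Z => ((deriv (deriv U) Z : ℝ) : ℂ) / (U Z - c) * ((‖φ Z‖ ^ 2 : ℝ) : ℂ))
      (volume.restrict (Ioi 0)) := by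
    refine (Continuous.aestronglyMeasurable (f := fun Z =>
      deriv (deriv φ) Z * conj (φ Z) - (α : ℂ) ^ 2 * ((‖φ Z‖ ^ 2 : ℝ) : ℂ))
      (by fun_prop)).congr ?_
    refine (ae_restrict_iff' measurableSet_Ioi).2 (ae_of_all _ fun Z hZ => ?_)
    dsimp only
    rw [rayleigh_deriv_deriv_mul_conj hc hray Z hZ]
    ring
  refine Integrable.mono' (hφL2.const_mul (M / c.im)) hmeas
    ((ae_restrict_iff' measurableSet_Ioi).2 (ae_of_all _ fun Z hZ => ?_))
  calc ‖((deriv (deriv U) Z : ℝ) : ℂ) / (U Z - c) * ((‖φ Z‖ ^ 2 : ℝ) : ℂ)‖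
      = |deriv (deriv U) Z| / ‖(U Z : ℂ) - c‖ * ‖φ Z‖ ^ 2 := by
        simp
    _ ≤ M / c.im * ‖φ Z‖ ^ 2 :=
        mul_le_mul_of_nonneg_right (div_le_div₀ ((abs_nonneg _).trans (hM Z hZ.le))
          (hM Z hZ.le) hc (Complex.im_le_norm_ofReal_sub _ _)) (by positivity)

theorem integral_rayleigh_weight
    (hU2 : ∃ M : ℝ, ∀ Z : ℝ, 0 ≤ Z → |deriv (deriv U) Z| ≤ M) (hc : 0 < c.im)
    (hφ : ContDiff ℝ 2 φ)
    (hray : ∀ Z ∈ Ioi (0:ℝ),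
      (Complex.ofReal (U Z) - c) * (deriv (deriv φ) Z - (α : ℂ)^2 * φ Z)
        = Complex.ofReal (deriv (deriv U) Z) * φ Z)
    (hφ0 : φ 0 = 0)
    (hφL2 : IntegrableOn (fun Z => ‖φ Z‖ ^ 2) (Ioi 0))
    (hφdL2 : IntegrableOn (fun Z => ‖deriv φ Z‖ ^ 2) (Ioi 0))
    (hcross : Tendsto (fun Z => deriv φ Z * conj (φ Z)) atTop (nhds 0)) :
    ∫ Z in Ioi (0:ℝ), ((deriv (deriv U) Z : ℝ) : ℂ) / (U Z - c) * ((‖φ Z‖ ^ 2 : ℝ) : ℂ)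
      = -(((∫ Z in Ioi (0:ℝ), ‖deriv φ Z‖ ^ 2) + α ^ 2 * ∫ Z in Ioi (0:ℝ), ‖φ Z‖ ^ 2 : ℝ) : ℂ) := by
  have hw := integrableOn_rayleigh_weight hU2 hc hφ hray hφL2
  have hφL2' : IntegrableOn (fun Z => ((‖φ Z‖ ^ 2 : ℝ) : ℂ)) (Ioi 0) := hφL2.ofReal
  have hA := hφL2'.const_mul ((α : ℂ) ^ 2)
  have hsplit := rayleigh_deriv_deriv_mul_conj hc hray
  have hIBP := integral_Ioi_deriv_deriv_mul_conj (hφ.differentiable (by norm_num))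
    hφ.differentiable_deriv_two hφ0
    (IntegrableOn.congr_fun (hA.add hw) (fun Z hZ => (hsplit Z hZ).symm) measurableSet_Ioi)
    hφdL2 hcross
  rw [setIntegral_congr_fun measurableSet_Ioi hsplit, integral_add hA hw, integral_const_mul,
    integral_complex_ofReal, integral_complex_ofReal] at hIBP
  rw [Complex.ofReal_add, Complex.ofReal_mul, Complex.ofReal_pow]
  linear_combination hIBP

theorem fjortoft_identity (v : ℝ)
    (hU2 : ∃ M : ℝ, ∀ Z : ℝ, 0 ≤ Z → |deriv (deriv U) Z| ≤ M) (hc : 0 < c.im)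
    (hφ : ContDiff ℝ 2 φ)
    (hray : ∀ Z ∈ Ioi (0:ℝ),
      (Complex.ofReal (U Z) - c) * (deriv (deriv φ) Z - (α : ℂ)^2 * φ Z)
        = Complex.ofReal (deriv (deriv U) Z) * φ Z)
    (hφ0 : φ 0 = 0)
    (hφL2 : IntegrableOn (fun Z => ‖φ Z‖ ^ 2) (Ioi 0))
    (hφdL2 : IntegrableOn (fun Z => ‖deriv φ Z‖ ^ 2) (Ioi 0))
    (hcross : Tendsto (fun Z => deriv φ Z * conj (φ Z)) atTop (nhds 0)) :
    ∫ Z in Ioi (0:ℝ),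
        deriv (deriv U) Z * (U Z - v) / Complex.normSq (U Z - c) * ‖φ Z‖ ^ 2
      = -((∫ Z in Ioi (0:ℝ), ‖deriv φ Z‖ ^ 2) + α ^ 2 * ∫ Z in Ioi (0:ℝ), ‖φ Z‖ ^ 2) := by
  have hw := (integrableOn_rayleigh_weight hU2 hc hφ hray hφL2).const_mul (c - v)
  have hpointwise : ∀ Z, deriv (deriv U) Z * (U Z - v) / Complex.normSq (U Z - c) * ‖φ Z‖ ^ 2
      = ((c - v) * (((deriv (deriv U) Z : ℝ) : ℂ) / (U Z - c) * ((‖φ Z‖ ^ 2 : ℝ) : ℂ))).im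
          / c.im := by
    intro Z
    rw [← mul_assoc, Complex.im_mul_ofReal, Complex.im_sub_mul_ofReal_div]
    field_simp
  have him : ∫ Z in Ioi (0:ℝ),
      ((c - v) * (((deriv (deriv U) Z : ℝ) : ℂ) / (U Z - c) * ((‖φ Z‖ ^ 2 : ℝ) : ℂ))).im
        = ((c - v) * ∫ Z in Ioi (0:ℝ),
            ((deriv (deriv U) Z : ℝ) : ℂ) / (U Z - c) * ((‖φ Z‖ ^ 2 : ℝ) : ℂ)).im := by
    rw [← integral_const_mul]
    exact integral_im hw
  simp_rw [hpointwise]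
  rw [integral_div, him, integral_rayleigh_weight hU2 hc hφ hray hφ0 hφL2 hφdL2 hcross,
    ← Complex.ofReal_neg, Complex.im_mul_ofReal, Complex.sub_im, Complex.ofReal_im, sub_zero]
  field_simp

end Rayleigh

theorem fjortoft_criterion_general
    (U : ℝ → ℝ) (α : ℝ) (c : ℂ) (φ : ℝ → ℂ)
    (hU2 : ∃ M : ℝ, ∀ Z : ℝ, 0 ≤ Z → |deriv (deriv U) Z| ≤ M)
    (hα : 0 < α)
    (hφ : ContDiff ℝ 2 φ)
    (hray : ∀ Z ∈ Ioi (0:ℝ),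
      (Complex.ofReal (U Z) - c) * (deriv (deriv φ) Z - (α : ℂ)^2 * φ Z)
        = Complex.ofReal (deriv (deriv U) Z) * φ Z)
    (hφ0 : φ 0 = 0)
    (hφL2 : IntegrableOn (fun Z => ‖φ Z‖^2) (Ioi 0))
    (hφdL2 : IntegrableOn (fun Z => ‖deriv φ Z‖^2) (Ioi 0))
    (hcross : Tendsto (fun Z => deriv φ Z * (starRingEnd ℂ) (φ Z)) atTop (nhds 0))
    (hc : 0 < c.im)
    (hφne : ∃ Z : ℝ, 0 ≤ Z ∧ φ Z ≠ 0) :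
    ∀ zc : ℝ, 0 ≤ zc → deriv (deriv U) zc = 0 →
      ∃ z : ℝ, 0 < z ∧ deriv (deriv U) z * (U z - U zc) < 0 := by
  intro zc _ _
  by_contra! hcon
  have hA : 0 < ∫ Z in Ioi (0:ℝ), ‖φ Z‖ ^ 2 := by
    obtain ⟨z, hz0, hz⟩ := hφne
    have hzpos : 0 < z := hz0.lt_of_ne (by rintro rfl; exact hz hφ0)
    exact isOpen_Ioi.setIntegral_pos_of_continuous (by fun_prop) hφL2
      (fun _ _ => by positivity) hzpos (pow_ne_zero 2 (norm_ne_zero_iff.mpr hz))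
  have hB : 0 ≤ ∫ Z in Ioi (0:ℝ), ‖deriv φ Z‖ ^ 2 :=
    setIntegral_nonneg measurableSet_Ioi fun _ _ => by positivity
  have hnonneg : 0 ≤ ∫ Z in Ioi (0:ℝ),
      deriv (deriv U) Z * (U Z - U zc) / Complex.normSq (U Z - c) * ‖φ Z‖ ^ 2 :=
    setIntegral_nonneg measurableSet_Ioi fun Z hZ =>
      mul_nonneg (div_nonneg (hcon Z hZ) (Complex.normSq_nonneg _)) (by positivity)
  rw [fjortoft_identity (U zc) hU2 hc hφ hray hφ0 hφL2 hφdL2 hcross] at hnonneg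
  linarith [mul_pos (pow_pos hα 2) hA]

/-- **Fjortoft's criterion.** For a nonzero unstable Rayleigh mode (`Im c > 0`),
for every point `z_c ≥ 0` with `U''(z_c) = 0` there is a point `z > 0` where
`U''(z)(U(z) - U(z_c)) < 0`. -/
theorem fjortoft_criterion
    (U : ℝ → ℝ) (α : ℝ) (c : ℂ) (φ : ℝ → ℂ)
    (hU : ContDiff ℝ 2 U)
    (hU2 : ∃ M : ℝ, ∀ Z : ℝ, 0 ≤ Z → |deriv (deriv U) Z| ≤ M)
    (hα : 0 < α)
    (hφ : ContDiff ℝ 2 φ)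
    (hray : ∀ Z ∈ Ioi (0:ℝ),
      (Complex.ofReal (U Z) - c) * (deriv (deriv φ) Z - (α : ℂ)^2 * φ Z)
        = Complex.ofReal (deriv (deriv U) Z) * φ Z)
    (hφ0 : φ 0 = 0)
    (hφ_inf : Tendsto φ atTop (nhds 0))
    (hφL2 : IntegrableOn (fun Z => ‖φ Z‖^2) (Ioi 0))
    (hφdL2 : IntegrableOn (fun Z => ‖deriv φ Z‖^2) (Ioi 0))
    (hcross : Tendsto (fun Z => deriv φ Z * (starRingEnd ℂ) (φ Z)) atTop (nhds 0))
    (hc : 0 < c.im)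
    (hφne : ∃ Z : ℝ, 0 ≤ Z ∧ φ Z ≠ 0) :
    ∀ zc : ℝ, 0 ≤ zc → deriv (deriv U) zc = 0 →
      ∃ z : ℝ, 0 < z ∧ deriv (deriv U) z * (U z - U zc) < 0 :=
  fjortoft_criterion_general U α c φ hU2 hα hφ hray hφ0 hφL2 hφdL2 hcross hc hφne
end
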